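/- Let p be an odd prime and r ∈ ℤ_p with Legendre symbol (r/p) = 1. Then the Haar measure of the set of pairs (a,b) ∈ ℤ_p² with ab + r a square in ℤ_p equals 1/2 + 1/(p(p+1)). -/

import Mathlib

/-!
Slice the set by the first coordinate `a`. If `p ∣ a`, then `a * b + r` is a unit whose residue is
a square for every `b`, hence a square by Hensel's lemma, and the slice is everything; otherwise
`b ↦ a * b + r` preserves Haar measure and the slice has measure `s`, the measure of the squares.
So the answer is `1/p + (1 - 1/p) s`. A unit is a square iff its residue is one of the `(p - 1)/2`
nonzero squares mod `p`, and a non-unit square is `p²` times a square, so `s = (p-1)/(2p) + s/p²`,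
i.e. `s = p/(2(p+1))`.
-/

open MeasureTheory

noncomputable instance (p : ℕ) [Fact p.Prime] : MeasurableSpace ℤ_[p] := borel _
instance (p : ℕ) [Fact p.Prime] : BorelSpace ℤ_[p] := ⟨rfl⟩

/-- The Haar measure on ℤ_p, normalized so that μ(ℤ_p) = 1. -/
noncomputable def μZp (p : ℕ) [Fact p.Prime] : Measure ℤ_[p] :=
  Measure.addHaarMeasure ⊤

open Finset in
theorem FiniteField.two_mul_card_nonzero_squares {F : Type*} [Field F] [Fintype F]
    [DecidableEq F] (hF : ringChar F ≠ 2) :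
    2 * #{a : F | a ≠ 0 ∧ IsSquare a} = Fintype.card F - 1 := by
  have hpoint : ∀ a : F, (if a ≠ 0 ∧ IsSquare a then 2 else 0 : ℤ)
      = (if a ≠ 0 then 1 else 0) + quadraticChar F a := by
    intro a
    by_cases ha : a = 0
    · simp [ha]
    by_cases hsq : IsSquare a
    · simp [ha, hsq, (quadraticChar_one_iff_isSquare ha).mpr hsq]
    · simp [ha, hsq, quadraticChar_neg_one_iff_not_isSquare.mpr hsq]
  have hsum := sum_congr rfl (fun a (_ : a ∈ univ) => hpoint a)
  rw [sum_add_distrib, quadraticChar_sum_zero hF, ← sum_filter, ← sum_filter] at hsum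
  simp only [sum_const, nsmul_eq_mul, mul_one, filter_ne', card_erase_of_mem (mem_univ _),
    card_univ, add_zero] at hsum
  omega

namespace PadicInt

variable {p : ℕ} [Fact p.Prime]

theorem toZMod_eq_zero_iff_dvd {x : ℤ_[p]} : toZMod x = 0 ↔ (p : ℤ_[p]) ∣ x := by
  rw [← RingHom.mem_ker, ker_toZMod, maximalIdeal_eq_span_p, Ideal.mem_span_singleton]

theorem toZMod_natCast_val (c : ZMod p) : toZMod (c.val : ℤ_[p]) = c := by
  rw [map_natCast, ZMod.natCast_zmod_val]

theorem isUnit_of_toZMod_ne_zero {x : ℤ_[p]} (hx : toZMod x ≠ 0) : IsUnit x := by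
  by_contra h
  exact hx (by rw [← RingHom.mem_ker, ker_toZMod]; exact h)

theorem preimage_toZMod_singleton (c : ZMod p) :
    toZMod ⁻¹' {c} = Metric.ball (c.val : ℤ_[p]) 1 := by
  ext x
  rw [Set.mem_preimage, Set.mem_singleton_iff, Metric.mem_ball, dist_eq_norm, norm_lt_one_iff_dvd,
    ← toZMod_eq_zero_iff_dvd, map_sub, toZMod_natCast_val, sub_eq_zero]

theorem measurable_toZMod [MeasurableSpace ℤ_[p]] [OpensMeasurableSpace ℤ_[p]] :
    Measurable (toZMod : ℤ_[p] → ZMod p) :=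
  measurable_to_countable' fun c => by
    rw [preimage_toZMod_singleton]; exact measurableSet_ball

theorem range_mul_p : Set.range ((p : ℤ_[p]) * ·) = toZMod ⁻¹' {0} := by
  ext x
  rw [Set.mem_preimage, Set.mem_singleton_iff, toZMod_eq_zero_iff_dvd]
  exact exists_congr fun y => eq_comm

theorem isSquare_iff_isSquare_toZMod (hp : p ≠ 2) {x : ℤ_[p]} (hx : toZMod x ≠ 0) :
    IsSquare x ↔ IsSquare (toZMod x) := by
  refine ⟨fun h => h.map toZMod, fun ⟨y, hy⟩ => ?_⟩
  have hy0 : y ≠ 0 := by rintro rfl; exact hx (by rw [hy, zero_mul])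
  set a : ℤ_[p] := (y.val : ℤ_[p])
  have h2 : toZMod (2 : ℤ_[p]) ≠ 0 := by
    rw [map_ofNat, ← Nat.cast_ofNat, Ne, ZMod.natCast_eq_zero_iff,
      Nat.prime_dvd_prime_iff_eq Fact.out Nat.prime_two]
    exact hp
  have hderiv : ‖(2 : ℤ_[p]) * a‖ = 1 := by
    rw [← isUnit_iff]
    exact isUnit_of_toZMod_ne_zero (by rw [map_mul, toZMod_natCast_val]; exact mul_ne_zero h2 hy0)
  have hval : ‖a ^ 2 - x‖ < 1 := by
    rw [norm_lt_one_iff_dvd, ← toZMod_eq_zero_iff_dvd, map_sub, map_pow, toZMod_natCast_val, hy,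
      sq, sub_self]
  obtain ⟨z, hz, -⟩ := hensels_lemma (F := Polynomial.X ^ 2 - Polynomial.C x) (a := a)
    (by simpa [one_add_one_eq_two, ← norm_mul, hderiv] using hval)
  exact ⟨z, by simpa [sub_eq_zero, sq, eq_comm] using hz⟩

end PadicInt

open scoped ENNReal
open PadicInt

section μZp

variable {p : ℕ} [Fact p.Prime]

instance : IsProbabilityMeasure (μZp p) :=
  ⟨Measure.addHaarMeasure_self (K₀ := ⊤)⟩

instance : (μZp p).IsAddLeftInvariant := by
  unfold μZp; infer_instance

theorem eq_measure_univ_smul_μZp (ν : Measure ℤ_[p]) [SigmaFinite ν] [ν.IsAddLeftInvariant] :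
    ν = ν Set.univ • μZp p :=
  Measure.addHaarMeasure_unique ν ⊤

theorem measurePreserving_mul_add {u : ℤ_[p]} (hu : IsUnit u) (t : ℤ_[p]) :
    MeasurePreserving (fun x => u * x + t) (μZp p) (μZp p) := by
  have hf : Measurable fun x : ℤ_[p] => u * x + t := by fun_prop
  refine ⟨hf, ?_⟩
  set ν := (μZp p).map fun x => u * x + t
  have : ν.IsAddLeftInvariant := by
    refine ⟨fun c => ?_⟩
    obtain ⟨w, hw⟩ := hu.exists_left_inv
    have hcomm : ((c + ·) ∘ fun x => u * x + t) = (fun x => u * x + t) ∘ (w * c + ·) := by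
      funext x
      simp only [Function.comp]
      linear_combination (-c) * hw
    rw [Measure.map_map (measurable_const_add c) hf, hcomm,
      ← Measure.map_map hf (measurable_const_add _), map_add_left_eq_self]
  have : IsProbabilityMeasure ν := Measure.isProbabilityMeasure_map hf.aemeasurable
  rw [eq_measure_univ_smul_μZp ν, measure_univ, one_smul]

theorem μZp_preimage_toZMod_singleton (c : ZMod p) : μZp p (toZMod ⁻¹' {c}) = (p : ℝ≥0∞)⁻¹ := by
  have htranslate : ∀ c : ZMod p, μZp p (toZMod ⁻¹' {c}) = μZp p (toZMod ⁻¹' {0}) := by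
    intro c
    rw [← measure_preimage_add (μZp p) (c.val : ℤ_[p])]
    congr 1
    ext x
    simp
  have hsum : ∑ c : ZMod p, μZp p (toZMod ⁻¹' {c}) = 1 := by
    rw [← measure_biUnion_finset (fun a _ b _ hab => Set.disjoint_singleton.mpr hab |>.preimage _)
      (fun c _ => measurable_toZMod (MeasurableSet.singleton c))]
    simp [← Set.preimage_iUnion, Set.iUnion_of_singleton]
  simp only [htranslate, Finset.sum_const, Finset.card_univ, ZMod.card, nsmul_eq_mul] at hsum
  rw [htranslate]
  exact ENNReal.eq_inv_of_mul_eq_one_left (by rwa [mul_comm] at hsum)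

theorem μZp_preimage_toZMod (T : Finset (ZMod p)) :
    μZp p (toZMod ⁻¹' T) = T.card * (p : ℝ≥0∞)⁻¹ := by
  have hT : toZMod ⁻¹' (T : Set (ZMod p)) = ⋃ c ∈ T, toZMod ⁻¹' {c} := by ext; simp
  rw [hT, measure_biUnion_finset (fun a _ b _ hab => Set.disjoint_singleton.mpr hab |>.preimage _)
      (fun c _ => measurable_toZMod (MeasurableSet.singleton c))]
  simp [μZp_preimage_toZMod_singleton]

theorem μZp_image_p_mul (A : Set ℤ_[p]) :
    μZp p (((p : ℤ_[p]) * ·) '' A) = (p : ℝ≥0∞)⁻¹ * μZp p A := by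
  have hp0 : (p : ℤ_[p]) ≠ 0 := Nat.cast_ne_zero.mpr (Fact.out : p.Prime).ne_zero
  have hemb : MeasurableEmbedding ((p : ℤ_[p]) * ·) :=
    ((continuous_const_mul _).isClosedEmbedding (mul_right_injective₀ hp0)).measurableEmbedding
  set ν := (μZp p).comap ((p : ℤ_[p]) * ·)
  have hν : ∀ s, ν s = μZp p (((p : ℤ_[p]) * ·) '' s) := hemb.comap_apply _
  have : ν.IsAddLeftInvariant := by
    refine ⟨fun c => Measure.ext fun s hs => ?_⟩
    rw [Measure.map_apply (measurable_const_add c) hs, hν, hν,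
      ← measure_preimage_add (μZp p) (p * c) (((p : ℤ_[p]) * ·) '' s)]
    congr 1
    ext x
    simp only [Set.mem_image, Set.mem_preimage]
    refine ⟨fun ⟨y, hy, hxy⟩ => ⟨c + y, hy, by rw [← hxy]; ring⟩,
      fun ⟨y, hy, hxy⟩ => ⟨y - c, by simpa using hy, by linear_combination hxy⟩⟩
  have huniv : ν Set.univ = (p : ℝ≥0∞)⁻¹ := by
    rw [hν, Set.image_univ, range_mul_p, μZp_preimage_toZMod_singleton]
  have : IsFiniteMeasure ν := ⟨by simp [huniv, (Fact.out : p.Prime).pos]⟩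
  rw [← hν, eq_measure_univ_smul_μZp ν, huniv, Measure.smul_apply, smul_eq_mul]

end μZp

section squares

variable {p : ℕ} [Fact p.Prime]

theorem measurableSet_setOf_isSquare : MeasurableSet {x : ℤ_[p] | IsSquare x} := by
  have : {x : ℤ_[p] | IsSquare x} = Set.range fun y => y * y := by
    ext x; exact exists_congr fun y => eq_comm
  rw [this]
  exact (isCompact_range (by fun_prop)).isClosed.measurableSet

theorem setOf_isSquare_inter_preimage_toZMod_zero :
    {x : ℤ_[p] | IsSquare x} ∩ toZMod ⁻¹' {0} =
      ((p : ℤ_[p]) * ·) '' (((p : ℤ_[p]) * ·) '' {x | IsSquare x}) := by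
  ext x
  simp only [Set.mem_inter_iff, Set.mem_ofPred_eq, Set.mem_preimage, Set.mem_singleton_iff,
    toZMod_eq_zero_iff_dvd, Set.image_image]
  constructor
  · rintro ⟨⟨y, rfl⟩, hdvd⟩
    obtain ⟨z, rfl⟩ := (prime_p.dvd_mul.mp hdvd).elim id id
    exact ⟨z * z, ⟨z, rfl⟩, by ring⟩
  · rintro ⟨_, ⟨z, rfl⟩, rfl⟩
    exact ⟨⟨p * z, by ring⟩, ⟨p * (z * z), by ring⟩⟩

theorem μZp_real_setOf_isSquare (hp : p ≠ 2) :
    (μZp p).real {x | IsSquare x} = p / (2 * (p + 1)) := by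
  set Q : Finset (ZMod p) := {a | a ≠ 0 ∧ IsSquare a}
  have hsplit : {x : ℤ_[p] | IsSquare x} =
      toZMod ⁻¹' Q ∪ ({x | IsSquare x} ∩ toZMod ⁻¹' {0}) := by
    ext x
    by_cases hx : toZMod x = 0
    · simp [Q, hx]
    · simp [Q, hx, isSquare_iff_isSquare_toZMod hp hx]
  have hdisj : Disjoint (toZMod ⁻¹' Q) ({x : ℤ_[p] | IsSquare x} ∩ toZMod ⁻¹' {0}) :=
    Set.disjoint_left.mpr fun x hx hx' => (Finset.mem_filter.mp hx).2.1 hx'.2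
  have hQ : 2 * (Q.card : ℝ) = p - 1 := by
    have hcard : 2 * Q.card = p - 1 := by
      convert FiniteField.two_mul_card_nonzero_squares
        (by rwa [ZMod.ringChar_zmod_n] : ringChar (ZMod p) ≠ 2)
      exact (ZMod.card p).symm
    rw [← Nat.cast_ofNat, ← Nat.cast_mul, hcard, Nat.cast_sub (Fact.out : p.Prime).one_le,
      Nat.cast_one]
  have hmeas := measurableSet_setOf_isSquare (p := p)
  have key : (μZp p).real {x | IsSquare x} =
      Q.card * (p : ℝ)⁻¹ + (p : ℝ)⁻¹ * ((p : ℝ)⁻¹ * (μZp p).real {x | IsSquare x}) := by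
    conv_lhs => rw [hsplit]
    rw [measureReal_union hdisj (hmeas.inter (measurable_toZMod (MeasurableSet.singleton 0))),
      measureReal_def, measureReal_def, measureReal_def, μZp_preimage_toZMod,
      setOf_isSquare_inter_preimage_toZMod_zero, μZp_image_p_mul, μZp_image_p_mul]
    simp [ENNReal.toReal_mul]
  have hp0 : (p : ℝ) ≠ 0 := by exact_mod_cast (Fact.out : p.Prime).ne_zero
  have hp2 : (p : ℝ) - 1 ≠ 0 := by
    have : (2 : ℝ) ≤ p := by exact_mod_cast (Fact.out : p.Prime).two_le
    linarith
  field_simp at key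
  rw [eq_div_iff (by positivity)]
  apply mul_left_cancel₀ hp2
  linear_combination 2 * key + p * hQ

end squares

theorem μZp_prod_setOf_isSquare_mul_add {p : ℕ} [Fact p.Prime] (hp : p ≠ 2) {r : ℤ_[p]}
    (hr0 : toZMod r ≠ 0) (hrsq : IsSquare (toZMod r)) :
    (μZp p).prod (μZp p) {x | IsSquare (x.1 * x.2 + r)} =
      μZp p (toZMod ⁻¹' {0}) + μZp p (toZMod ⁻¹' {0})ᶜ * μZp p {x | IsSquare x} := by
  have hF := measurable_toZMod (p := p) (MeasurableSet.singleton 0)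
  have hS := measurableSet_setOf_isSquare (p := p)
  have hslice : ∀ a, μZp p (Prod.mk a ⁻¹' {x | IsSquare (x.1 * x.2 + r)}) =
      (toZMod ⁻¹' {0}).indicator (fun _ => 1) a + (toZMod ⁻¹' {0})ᶜ.indicator
        (fun _ => μZp p {x | IsSquare x}) a := by
    intro a
    by_cases ha : toZMod a = 0
    · have hall : ∀ b, IsSquare (a * b + r) := fun b => by
        have hab : toZMod (a * b + r) = toZMod r := by simp [ha]
        exact (isSquare_iff_isSquare_toZMod hp (hab ▸ hr0)).mpr (hab ▸ hrsq)
      simp [ha, hall]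
    · rw [Set.indicator_of_notMem (by simpa using ha), Set.indicator_of_mem (by simpa using ha),
        zero_add]
      exact (measurePreserving_mul_add (isUnit_of_toZMod_ne_zero ha) r).measure_preimage
        hS.nullMeasurableSet
  have hE : MeasurableSet {x : ℤ_[p] × ℤ_[p] | IsSquare (x.1 * x.2 + r)} :=
    hS.preimage (f := fun x : ℤ_[p] × ℤ_[p] => x.1 * x.2 + r) (by fun_prop)
  rw [Measure.prod_apply hE, lintegral_congr hslice,
    lintegral_add_left (measurable_const.indicator hF), lintegral_indicator_const hF,
    lintegral_indicator_const hF.compl]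
  simp [mul_comm]

theorem stmt4 (p : ℕ) [Fact p.Prime] (hp : p ≠ 2) (r : ℤ_[p])
    (hr0 : PadicInt.toZMod r ≠ 0) (hrsq : IsSquare (PadicInt.toZMod r)) :
    (((μZp p).prod (μZp p)) {x : ℤ_[p] × ℤ_[p] | IsSquare (x.1 * x.2 + r)}).toReal
      = 1/2 + 1/(p*(p+1)) := by
  have hF := measurable_toZMod (p := p) (MeasurableSet.singleton 0)
  have hF0 : (μZp p).real (toZMod ⁻¹' {0}) = (p : ℝ)⁻¹ := by
    simp [measureReal_def, μZp_preimage_toZMod_singleton]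
  rw [μZp_prod_setOf_isSquare_mul_add hp hr0 hrsq, ENNReal.toReal_add (by finiteness)
    (by finiteness), ENNReal.toReal_mul, ← measureReal_def, ← measureReal_def, ← measureReal_def,
    measureReal_compl hF, hF0, probReal_univ, μZp_real_setOf_isSquare hp]
  have hp0 : (p : ℝ) ≠ 0 := by exact_mod_cast (Fact.out : p.Prime).ne_zero
  field_simp
  ring
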